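/- There is a surjective group homomorphism Φ : Homeo(L̄₊ⁿ) → Sₙ that splits, given by the action of a homeomorphism on the n path components of L̄₊ⁿ of dimension n−1 (equivalently, on the path components whose label p ∈ {0,Ω}ⁿ has exactly one coordinate equal to Ω); the splitting is given by coordinate-permutation homeomorphisms. -/

import Mathlib

/-!
A point of `L̄₊ⁿ` lies in the stratum labelled by the set of its coordinates equal to `Ω`. Two
points of the same stratum lie in a preconnected separable set (a product of copies of `{Ω}` and
of initial segments `[0, (a, 0))` of `L₊`). Conversely, a preconnected separable subset of `L̄₊`
containing `Ω` is `{Ω}`: otherwise it would contain some `[u, Ω]`, which is not separable because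
every countable subset of `L₊` is bounded in `L₊`. Hence continuous maps send strata into strata.
The closure of the stratum of `S` is the union of the strata of the supersets of `S`, so a
homeomorphism induces an order automorphism of the power set of the index set, and such an
automorphism permutes the singletons; this permutation is `Φ`. A coordinate permutation acts on
the strata by itself, which gives the splitting.
-/

/-- The set of countable ordinals (ordinals less than the first uncountable ordinal `ω₁`). -/
def SOmega : Type 1 := Set.Iio (Cardinal.aleph 1).ord

noncomputable instance : LinearOrder SOmega :=
  inferInstanceAs (LinearOrder (Set.Iio (Cardinal.aleph 1).ord))

/-- The half-open long line `L₊ = [0,1) × S_Ω` with the lexicographic order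
(ordinal coordinate first, then the real coordinate). -/
def LongLinePlus : Type 1 := SOmega ×ₗ (Set.Ico (0:ℝ) 1)

noncomputable instance : LinearOrder LongLinePlus :=
  inferInstanceAs (LinearOrder (SOmega ×ₗ (Set.Ico (0:ℝ) 1)))

/-- `L₊` carries the order topology. -/
noncomputable instance : TopologicalSpace LongLinePlus := Preorder.topology LongLinePlus
instance : OrderTopology LongLinePlus := ⟨rfl⟩

/-- The extended half-long line `L̄₊ = L₊ ∪ {Ω}`, with `Ω` adjoined as a top element,
given the order topology. -/
def LongLinePlusBar : Type 1 := WithTop LongLinePlus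

noncomputable instance : LinearOrder LongLinePlusBar :=
  inferInstanceAs (LinearOrder (WithTop LongLinePlus))

instance : OrderTop LongLinePlusBar := inferInstanceAs (OrderTop (WithTop LongLinePlus))

noncomputable instance : TopologicalSpace LongLinePlusBar := Preorder.topology LongLinePlusBar
instance : OrderTopology LongLinePlusBar := ⟨rfl⟩

/-- The inclusion `L₊ ↪ L̄₊`. -/
def LongLinePlus.toBar (x : LongLinePlus) : LongLinePlusBar := WithTop.some x

open Set TopologicalSpace

section
variable {α : Type*} [LinearOrder α] [TopologicalSpace α] [OrderTopology α] [DenselyOrdered α]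

lemma IsPreconnected.Iic_of_Iio {x : α} (h : IsPreconnected (Iio x)) : IsPreconnected (Iic x) := by
  rcases (Iio x).eq_empty_or_nonempty with he | hne
  · rw [← Iio_insert, he, insert_empty_eq]
    exact isPreconnected_singleton
  · rw [← closure_Iio' hne]
    exact h.closure

end

namespace OrderIso
variable {α β γ : Type*}

lemma exists_apply_singleton (e : Set α ≃o Set β) (a : α) : ∃ b, e {a} = {b} :=
  Set.isAtom_iff.1 ((e.isAtom_iff {a}).2 (Set.isAtom_singleton a))

noncomputable def singletonEquiv (e : Set α ≃o Set β) : α ≃ β where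
  toFun a := (e.exists_apply_singleton a).choose
  invFun b := (e.symm.exists_apply_singleton b).choose
  left_inv a := singleton_injective <| by
    rw [← (e.symm.exists_apply_singleton _).choose_spec,
      ← (e.exists_apply_singleton a).choose_spec, symm_apply_apply]
  right_inv b := singleton_injective <| by
    rw [← (e.exists_apply_singleton _).choose_spec,
      ← (e.symm.exists_apply_singleton b).choose_spec, apply_symm_apply]

lemma apply_singleton (e : Set α ≃o Set β) (a : α) : e {a} = {e.singletonEquiv a} :=
  (e.exists_apply_singleton a).choose_spec

lemma singletonEquiv_apply_eq_iff (e : Set α ≃o Set β) {a : α} {b : β} :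
    e.singletonEquiv a = b ↔ e {a} = {b} := by
  rw [apply_singleton, singleton_eq_singleton_iff]

lemma singletonEquiv_trans (e : Set α ≃o Set β) (f : Set β ≃o Set γ) :
    (e.trans f).singletonEquiv = e.singletonEquiv.trans f.singletonEquiv :=
  Equiv.ext fun a => (singletonEquiv_apply_eq_iff _).2 <| by
    rw [trans_apply, apply_singleton, apply_singleton, Equiv.trans_apply]

lemma singletonEquiv_toOrderIsoSet (σ : α ≃ β) : σ.toOrderIsoSet.singletonEquiv = σ :=
  Equiv.ext fun _ => (singletonEquiv_apply_eq_iff _).2 image_singleton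

end OrderIso

namespace SOmega

instance : WellFoundedLT SOmega := inferInstanceAs (WellFoundedLT (Iio (Cardinal.aleph 1).ord))

instance : OrderBot SOmega where
  bot := ⟨0, Cardinal.ord_pos.2 (Cardinal.aleph_pos 1)⟩
  bot_le a := zero_le (a := a.1)

lemma countable_Iio (a : SOmega) : (Iio a).Countable := by
  have h : (Iio a.1).Countable := by
    rw [← Cardinal.le_aleph0_iff_set_countable, Cardinal.mk_Iio_ordinal, Cardinal.lift_le_aleph0,
      ← Cardinal.lt_aleph_one_iff, ← Cardinal.lt_ord]
    exact a.2
  exact h.preimage Subtype.val_injective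

lemma exists_forall_lt_of_countable {s : Set SOmega} (hs : s.Countable) :
    ∃ b : SOmega, ∀ a ∈ s, a < b := by
  have : Countable s := hs.to_subtype
  have hsup : ⨆ a : s, Order.succ a.1.1 < (Cardinal.aleph 1).ord := by
    have hlim := Cardinal.isSuccLimit_ord (Cardinal.aleph0_le_aleph 1)
    have h := Ordinal.iSup_lt_omega_one (f := fun a : s => Order.succ a.1.1)
      fun a => Cardinal.ord_aleph 1 ▸ hlim.succ_lt a.1.2
    rwa [← Cardinal.ord_aleph] at h
  exact ⟨⟨_, hsup⟩, fun a ha =>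
    (Order.lt_succ a.1).trans_le (Ordinal.le_iSup (fun a : s => Order.succ a.1.1) ⟨a, ha⟩)⟩

end SOmega

instance : DenselyOrdered LongLinePlus := inferInstanceAs (DenselyOrdered (SOmega ×ₗ Ico (0:ℝ) 1))

instance : NoMaxOrder LongLinePlus := inferInstanceAs (NoMaxOrder (SOmega ×ₗ Ico (0:ℝ) 1))

instance : DenselyOrdered LongLinePlusBar := inferInstanceAs (DenselyOrdered (WithTop LongLinePlus))

namespace LongLinePlusBar

def mk (a : SOmega) (t : Ico (0:ℝ) 1) : LongLinePlusBar := LongLinePlus.toBar (toLex (a, t))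

lemma mk_lt_mk {a b : SOmega} {t s : Ico (0:ℝ) 1} : mk a t < mk b s ↔ a < b ∨ a = b ∧ t < s :=
  WithTop.coe_lt_coe.trans Prod.Lex.toLex_lt_toLex

lemma mk_le_mk {a b : SOmega} {t s : Ico (0:ℝ) 1} : mk a t ≤ mk b s ↔ a < b ∨ a = b ∧ t ≤ s :=
  WithTop.coe_le_coe.trans Prod.Lex.toLex_le_toLex

lemma mk_lt_mk_of_lt {a b : SOmega} (h : a < b) (t s : Ico (0:ℝ) 1) : mk a t < mk b s :=
  mk_lt_mk.2 (Or.inl h)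

lemma le_of_mk_le_mk {a b : SOmega} {t s : Ico (0:ℝ) 1} (h : mk a t ≤ mk b s) : a ≤ b := by
  rcases mk_le_mk.1 h with h | ⟨rfl, -⟩
  exacts [h.le, le_rfl]

lemma mk_ne_top (a : SOmega) (t : Ico (0:ℝ) 1) : mk a t ≠ ⊤ := WithTop.coe_ne_top

lemma exists_eq_mk {z : LongLinePlusBar} (hz : z ≠ ⊤) : ∃ a t, z = mk a t := by
  obtain ⟨x, rfl⟩ := WithTop.ne_top_iff_exists.1 hz
  exact ⟨(ofLex (α := SOmega × Ico (0:ℝ) 1) x).1, (ofLex (α := SOmega × Ico (0:ℝ) 1) x).2, rfl⟩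

lemma strictMono_mk (a : SOmega) : StrictMono (mk a) := fun _ _ h => mk_lt_mk.2 (Or.inr ⟨rfl, h⟩)

lemma ordConnected_range_mk (a : SOmega) : (range (mk a)).OrdConnected := by
  refine ⟨?_⟩
  rintro _ ⟨t, rfl⟩ _ ⟨s, rfl⟩ z ⟨hz₁, hz₂⟩
  obtain ⟨b, r, rfl⟩ := exists_eq_mk (ne_top_of_le_ne_top (mk_ne_top a s) hz₂)
  obtain rfl : b = a := (le_of_mk_le_mk hz₂).antisymm (le_of_mk_le_mk hz₁)
  exact ⟨r, rfl⟩

lemma continuous_mk (a : SOmega) : Continuous (mk a) :=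
  ((strictMono_mk a).isEmbedding_of_ordConnected (ordConnected_range_mk a)).continuous

lemma closure_compl_top : closure ({⊤}ᶜ : Set LongLinePlusBar) = univ := by
  rw [← Iio_top, closure_Iio' ⟨mk ⊥ 0, lt_top_iff_ne_top.2 (mk_ne_top _ _)⟩, Iic_top]

lemma exists_forall_lt_mk_of_countable {c : Set LongLinePlusBar} (hc : c.Countable) :
    ∃ a : SOmega, ∀ z ∈ c, z ≠ ⊤ → z < mk a 0 := by
  let ord : LongLinePlusBar → SOmega := fun z =>
    (ofLex (α := SOmega × Ico (0:ℝ) 1) (WithTop.untopD (toLex (⊥, 0)) z)).1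
  obtain ⟨a, ha⟩ := SOmega.exists_forall_lt_of_countable (hc.image ord)
  refine ⟨a, fun z hz hz_top => ?_⟩
  obtain ⟨b, t, rfl⟩ := exists_eq_mk hz_top
  exact mk_lt_mk_of_lt (ha _ ⟨_, hz, rfl⟩) t 0

lemma not_isSeparable_Icc_top {u : LongLinePlusBar} (hu : u ≠ ⊤) : ¬ IsSeparable (Icc u ⊤) := by
  rintro ⟨c, hc, hsub⟩
  obtain ⟨a, ha⟩ := exists_forall_lt_mk_of_countable hc
  obtain ⟨p, hp₁, hp₂⟩ :=
    exists_between (max_lt (lt_top_iff_ne_top.2 hu) (lt_top_iff_ne_top.2 (mk_ne_top a 0)))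
  obtain ⟨z, ⟨hz₁, hz₂⟩, hzc⟩ := mem_closure_iff.1 (hsub ⟨(le_max_left _ _).trans hp₁.le, le_top⟩)
    (Ioo (mk a 0) ⊤) isOpen_Ioo ⟨(le_max_right _ _).trans_lt hp₁, hp₂⟩
  exact (ha z hzc hz₂.ne).not_gt hz₁

lemma eq_top_of_isPreconnected_of_isSeparable {s : Set LongLinePlusBar} (hs : IsPreconnected s)
    (hs' : IsSeparable s) (htop : ⊤ ∈ s) {z : LongLinePlusBar} (hz : z ∈ s) : z = ⊤ := by
  by_contra hz_top
  exact not_isSeparable_Icc_top hz_top (hs'.mono (hs.ordConnected.out hz htop))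

lemma Iio_mk_zero_subset (a : SOmega) : Iio (mk a 0) ⊆ ⋃ b : Iio a, range (mk b) := by
  intro z hz
  obtain ⟨b, t, rfl⟩ := exists_eq_mk hz.ne_top
  rcases mk_lt_mk.1 hz with hb | ⟨-, ht⟩
  · exact mem_iUnion.2 ⟨⟨b, hb⟩, t, rfl⟩
  · exact absurd ht (not_lt.2 Set.Ico.nonneg)

lemma range_mk_subset_Iio {a b : SOmega} (h : b < a) : range (mk b) ⊆ Iio (mk a 0) := by
  rintro _ ⟨t, rfl⟩
  exact mk_lt_mk_of_lt h t 0

lemma isSeparable_Iio_mk_zero (a : SOmega) : IsSeparable (Iio (mk a 0)) := by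
  have : Countable (Iio a) := (SOmega.countable_Iio a).to_subtype
  exact (IsSeparable.iUnion fun b : Iio a => isSeparable_range (continuous_mk b)).mono
    (Iio_mk_zero_subset a)

lemma isPreconnected_Iio_mk_zero (a : SOmega) : IsPreconnected (Iio (mk a 0)) := by
  induction a using WellFoundedLT.induction with
  | _ a ih =>
  have h_eq : Iio (mk a 0) = ⋃₀ ((fun b => Iic (mk b 0) ∪ range (mk b)) '' Iio a) := by
    refine Subset.antisymm ((Iio_mk_zero_subset a).trans ?_) ?_
    · exact iUnion_subset fun b => subset_sUnion_of_subset _ _ subset_union_right ⟨b, b.2, rfl⟩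
    · rintro z ⟨_, ⟨b, hb, rfl⟩, hz⟩
      exact hz.elim (fun hz => hz.trans_lt (mk_lt_mk_of_lt hb 0 0)) (range_mk_subset_Iio hb ·)
  have := Subtype.preconnectedSpace (isPreconnected_Ico (a := (0:ℝ)) (b := 1))
  rw [h_eq]
  refine isPreconnected_sUnion (mk ⊥ 0) _ ?_ ?_ <;> rintro _ ⟨b, hb, rfl⟩
  · exact Or.inl (mk_le_mk.2 ((bot_le (a := b)).lt_or_eq.imp id fun h => ⟨h, le_rfl⟩))
  · exact (ih b hb).Iic_of_Iio.union (mk b 0) self_mem_Iic ⟨0, rfl⟩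
      (isPreconnected_range (continuous_mk b))

lemma exists_isPreconnected_isSeparable {u v : LongLinePlusBar} (hu : u ≠ ⊤) (hv : v ≠ ⊤) :
    ∃ s, IsPreconnected s ∧ IsSeparable s ∧ u ∈ s ∧ v ∈ s := by
  obtain ⟨a, ha⟩ := exists_forall_lt_mk_of_countable ((countable_singleton u).insert v)
  exact ⟨Iio (mk a 0), isPreconnected_Iio_mk_zero a, isSeparable_Iio_mk_zero a,
    ha u (by simp) hu, ha v (by simp) hv⟩

variable {ι κ μ : Type*}

def topIndices (x : ι → LongLinePlusBar) : Set ι := {j | x j = ⊤}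

lemma topIndices_subset_of_mem {s : Set (ι → LongLinePlusBar)} (hs : IsPreconnected s)
    (hs' : IsSeparable s) {x y : ι → LongLinePlusBar} (hx : x ∈ s) (hy : y ∈ s) :
    topIndices x ⊆ topIndices y := fun j hj =>
  eq_top_of_isPreconnected_of_isSeparable (hs.image _ (continuous_apply j).continuousOn)
    (hs'.image (continuous_apply j)) (hj ▸ mem_image_of_mem _ hx) (mem_image_of_mem _ hy)

lemma exists_isPreconnected_isSeparable_of_topIndices_eq [Countable ι]
    {x y : ι → LongLinePlusBar} (h : topIndices x = topIndices y) :
    ∃ s, IsPreconnected s ∧ IsSeparable s ∧ x ∈ s ∧ y ∈ s := by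
  have hcoord : ∀ j, ∃ s : Set LongLinePlusBar,
      IsPreconnected s ∧ IsSeparable s ∧ x j ∈ s ∧ y j ∈ s := by
    intro j
    by_cases hx : x j = ⊤
    · have hy : y j = ⊤ := show j ∈ topIndices y from h ▸ hx
      exact ⟨{⊤}, isPreconnected_singleton, (countable_singleton _).isSeparable, hx, hy⟩
    · have hy : y j ≠ ⊤ := fun hy => hx (show j ∈ topIndices x from h ▸ hy)
      exact exists_isPreconnected_isSeparable hx hy
  choose s hs hs' hx hy using hcoord
  exact ⟨univ.pi s, isPreconnected_univ_pi hs, IsSeparable.univ_pi hs', fun j _ => hx j,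
    fun j _ => hy j⟩

open Classical in
lemma setOf_topIndices_eq (S : Set ι) :
    {x : ι → LongLinePlusBar | topIndices x = S} =
      univ.pi fun j => if j ∈ S then {⊤} else {⊤}ᶜ := by
  ext x
  simp only [mem_ofPred_eq, mem_univ_pi, Set.ext_iff, topIndices]
  refine forall_congr' fun j => ?_
  by_cases hj : j ∈ S <;> simp [hj]

lemma closure_setOf_topIndices_eq (S : Set ι) :
    closure {x : ι → LongLinePlusBar | topIndices x = S} = {x | S ⊆ topIndices x} := by
  classical
  rw [setOf_topIndices_eq, closure_pi_set]
  ext x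
  simp only [mem_univ_pi, mem_ofPred_eq]
  refine ⟨fun h j hj => ?_, fun h j => ?_⟩
  · simpa [hj, topIndices] using h j
  · by_cases hj : j ∈ S
    · simpa [hj, topIndices] using h hj
    · rw [if_neg hj, closure_compl_top]
      trivial

section ContinuousMap
variable [Countable ι] {f : (ι → LongLinePlusBar) → (κ → LongLinePlusBar)}

lemma topIndices_map_eq (hf : Continuous f) {x y : ι → LongLinePlusBar}
    (h : topIndices x = topIndices y) : topIndices (f x) = topIndices (f y) := by
  obtain ⟨s, hs, hs', hx, hy⟩ := exists_isPreconnected_isSeparable_of_topIndices_eq h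
  have hfs := hs.image f hf.continuousOn
  have hfs' := hs'.image hf
  exact (topIndices_subset_of_mem hfs hfs' (mem_image_of_mem f hx) (mem_image_of_mem f hy)).antisymm
    (topIndices_subset_of_mem hfs hfs' (mem_image_of_mem f hy) (mem_image_of_mem f hx))

lemma topIndices_map_mono (hf : Continuous f) {x y : ι → LongLinePlusBar}
    (h : topIndices x ⊆ topIndices y) : topIndices (f x) ⊆ topIndices (f y) := by
  have hy : y ∈ closure {z | topIndices z = topIndices x} := by
    rwa [closure_setOf_topIndices_eq]
  have := map_mem_closure (t := {w | topIndices w = topIndices (f x)}) hf hy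
    fun z (hz : topIndices z = topIndices x) => topIndices_map_eq hf hz
  rwa [closure_setOf_topIndices_eq] at this

end ContinuousMap

open Classical in
noncomputable def ofTopIndices (S : Set ι) : ι → LongLinePlusBar :=
  S.piecewise (fun _ => ⊤) (fun _ => mk ⊥ 0)

lemma topIndices_ofTopIndices (S : Set ι) : topIndices (ofTopIndices S) = S := by
  classical
  ext j
  by_cases hj : j ∈ S <;> simp [topIndices, ofTopIndices, hj, mk_ne_top]

lemma topIndices_piCongrLeft (σ : ι ≃ κ) (x : ι → LongLinePlusBar) :
    topIndices (Homeomorph.piCongrLeft σ x) = σ '' topIndices x := by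
  ext j
  obtain ⟨i, rfl⟩ := σ.surjective j
  simp [topIndices, Homeomorph.piCongrLeft_apply_apply]

variable [Countable ι] [Countable κ]

noncomputable def topIndicesOrderIso (h : (ι → LongLinePlusBar) ≃ₜ (κ → LongLinePlusBar)) :
    Set ι ≃o Set κ :=
  Equiv.toOrderIso
    { toFun S := topIndices (h (ofTopIndices S))
      invFun S := topIndices (h.symm (ofTopIndices S))
      left_inv S := by
        dsimp only
        rw [topIndices_map_eq h.symm.continuous (topIndices_ofTopIndices _),
          h.symm_apply_apply, topIndices_ofTopIndices]
      right_inv S := by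
        dsimp only
        rw [topIndices_map_eq h.continuous (topIndices_ofTopIndices _),
          h.apply_symm_apply, topIndices_ofTopIndices] }
    (fun _ _ hST => topIndices_map_mono h.continuous
      (by rwa [topIndices_ofTopIndices, topIndices_ofTopIndices]))
    (fun _ _ hST => topIndices_map_mono h.symm.continuous
      (by rwa [topIndices_ofTopIndices, topIndices_ofTopIndices]))

lemma topIndices_homeomorph_apply (h : (ι → LongLinePlusBar) ≃ₜ (κ → LongLinePlusBar))
    (x : ι → LongLinePlusBar) : topIndices (h x) = topIndicesOrderIso h (topIndices x) :=
  topIndices_map_eq h.continuous (topIndices_ofTopIndices _).symm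

lemma topIndicesOrderIso_trans [Countable μ] (f : (ι → LongLinePlusBar) ≃ₜ (κ → LongLinePlusBar))
    (g : (κ → LongLinePlusBar) ≃ₜ (μ → LongLinePlusBar)) :
    topIndicesOrderIso (f.trans g) = (topIndicesOrderIso f).trans (topIndicesOrderIso g) :=
  OrderIso.ext <| funext fun _ => topIndices_homeomorph_apply g _

lemma topIndicesOrderIso_piCongrLeft (σ : ι ≃ κ) :
    topIndicesOrderIso (Homeomorph.piCongrLeft (Y := fun _ => LongLinePlusBar) σ) =
      σ.toOrderIsoSet :=
  OrderIso.ext <| funext fun S => by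
    rw [Equiv.toOrderIsoSet_apply, ← topIndices_ofTopIndices S, ← topIndices_piCongrLeft,
      topIndices_homeomorph_apply, topIndices_ofTopIndices]

end LongLinePlusBar

open LongLinePlusBar

/-- There is a surjective homomorphism `Φ : Homeo(L̄₊ⁿ) → Sₙ`, given by the action of a
homeomorphism on the `n` path components of `L̄₊ⁿ` whose label has exactly one coordinate
equal to `Ω`, and it splits via the coordinate-permutation homeomorphisms. -/
theorem longLinePlusBar_pow_homeo_to_symm (n : ℕ) :
    ∃ Φ : ((Fin n → LongLinePlusBar) ≃ₜ (Fin n → LongLinePlusBar)) → Equiv.Perm (Fin n),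
      (∀ f g, Φ (f.trans g) = (Φ f).trans (Φ g)) ∧
      (∀ h : (Fin n → LongLinePlusBar) ≃ₜ (Fin n → LongLinePlusBar),
        ∀ (i : Fin n) (x : Fin n → LongLinePlusBar),
          (∀ j, x j = ⊤ ↔ j = i) → ∀ j, (h x j = ⊤ ↔ j = Φ h i)) ∧
      Function.Surjective Φ ∧
      ∃ s : Equiv.Perm (Fin n) → ((Fin n → LongLinePlusBar) ≃ₜ (Fin n → LongLinePlusBar)),
        (∀ σ x i, s σ x (σ i) = x i) ∧ ∀ σ, Φ (s σ) = σ := by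
  let s (σ : Equiv.Perm (Fin n)) := Homeomorph.piCongrLeft (Y := fun _ => LongLinePlusBar) σ
  have hsplit (σ : Equiv.Perm (Fin n)) : (topIndicesOrderIso (s σ)).singletonEquiv = σ := by
    rw [topIndicesOrderIso_piCongrLeft, OrderIso.singletonEquiv_toOrderIsoSet]
  refine ⟨fun h => (topIndicesOrderIso h).singletonEquiv, fun f g => ?_, fun h i x hx => ?_,
    fun σ => ⟨s σ, hsplit σ⟩, s,
    fun σ => Homeomorph.piCongrLeft_apply_apply (Y := fun _ => LongLinePlusBar) σ, hsplit⟩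
  · exact (congrArg _ (topIndicesOrderIso_trans f g)).trans (OrderIso.singletonEquiv_trans _ _)
  · have h_top : topIndices (h x) = {(topIndicesOrderIso h).singletonEquiv i} := by
      rw [topIndices_homeomorph_apply, show topIndices x = {i} from Set.ext hx,
        OrderIso.apply_singleton]
    exact Set.ext_iff.1 h_top
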